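/- Let (Z1, ρ1) and (Z2, ρ2) be compact semi-metric spaces. Then d_AI((Z1,ρ1),(Z2,ρ2)) = 0 if and only if there exists a surjective isometry f : (Z1,ρ1) → (Z2,ρ2), i.e. a surjective map f : Z1 → Z2 with ρ2(f(ξ),f(η)) = ρ1(ξ,η) for all ξ,η ∈ Z1. -/

import Mathlib

open Filter Topology Metric
open scoped ENNReal

universe u v

/-- A semi-metric (separating function) on a compact metrizable space: continuous, symmetric,
nonnegative, and vanishing exactly on the diagonal. -/
def IsSemiMetric {Z : Type*} [TopologicalSpace Z] (ρ : Z → Z → ℝ) : Prop :=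
  Continuous (Function.uncurry ρ) ∧ (∀ ξ η, ρ ξ η = ρ η ξ) ∧
    (∀ ξ η, 0 ≤ ρ ξ η) ∧ ∀ ξ η, ρ ξ η = 0 ↔ ξ = η

/-- An antipodal function: a semi-metric of diameter at most one such that every point has an
antipode at distance one. -/
def IsAntipodalFn {Z : Type*} [TopologicalSpace Z] (ρ : Z → Z → ℝ) : Prop :=
  IsSemiMetric ρ ∧ (∀ ξ η, ρ ξ η ≤ 1) ∧ ∀ ξ, ∃ η, ρ ξ η = 1

/-- An `ε`-isometry between semi-metric spaces: distortion less than `ε`, and the image is an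
`ε`-net. -/
def IsEpsIsometry {Z₁ : Type*} {Z₂ : Type*} (ρ₁ : Z₁ → Z₁ → ℝ) (ρ₂ : Z₂ → Z₂ → ℝ)
    (ε : ℝ) (f : Z₁ → Z₂) : Prop :=
  (∀ ξ η : Z₁, |ρ₂ (f ξ) (f η) - ρ₁ ξ η| < ε) ∧ ∀ ζ : Z₂, ∃ ξ : Z₁, ρ₂ (f ξ) ζ < ε

/-- The almost-isometry (AI) distance between two semi-metric spaces: the infimum of all `ε > 0`
for which there are `ε`-isometries in both directions (`∞` if there are none). -/
noncomputable def dAI {Z₁ : Type*} {Z₂ : Type*} (ρ₁ : Z₁ → Z₁ → ℝ) (ρ₂ : Z₂ → Z₂ → ℝ) : ℝ≥0∞ :=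
  ⨅ (ε : ℝ) (_ : 0 < ε) (_ : ∃ f : Z₁ → Z₂, IsEpsIsometry ρ₁ ρ₂ ε f)
    (_ : ∃ g : Z₂ → Z₁, IsEpsIsometry ρ₂ ρ₁ ε g), ENNReal.ofReal ε

/-! If `dAI ρ₁ ρ₂ = 0` there are `1/(n+1)`-isometries `Fₙ : Z₁ → Z₂`. By compactness of `Z₂` they
converge pointwise along an ultrafilter to a map `f`, which preserves the semi-metrics by
continuity. For surjectivity, given `ζ` pick `ξₙ` with `ρ₂ (Fₙ ξₙ) ζ < 1/(n+1)` and let `ξ` be a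
limit of `ξₙ`; since `ρ₂ (Fₙ ξ) (Fₙ ξₙ) ≤ ρ₁ ξ ξₙ + 1/(n+1) → 0`, we get `f ξ = ζ`. There is no
triangle inequality, so limits are identified only through continuity of `ρ` and
`ρ x y = 0 ↔ x = y`. Conversely, a surjective isometry is injective, and it and its inverse are
`ε`-isometries for every `ε > 0`. -/

section EpsIsometry

variable {ι Z₁ Z₂ : Type*} {ρ₁ : Z₁ → Z₁ → ℝ} {ρ₂ : Z₂ → Z₂ → ℝ}

theorem IsEpsIsometry.mono {ε δ : ℝ} {f : Z₁ → Z₂} (hf : IsEpsIsometry ρ₁ ρ₂ ε f) (hεδ : ε ≤ δ) :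
    IsEpsIsometry ρ₁ ρ₂ δ f :=
  ⟨fun ξ η => (hf.1 ξ η).trans_le hεδ, fun ζ => (hf.2 ζ).imp fun _ h => h.trans_le hεδ⟩

theorem IsEpsIsometry.le_add {ε : ℝ} {f : Z₁ → Z₂} (hf : IsEpsIsometry ρ₁ ρ₂ ε f) (ξ η : Z₁) :
    ρ₂ (f ξ) (f η) ≤ ρ₁ ξ η + ε := by
  linarith [(abs_sub_lt_iff.1 (hf.1 ξ η)).1]

theorem dAI_eq_zero_iff_forall_isEpsIsometry : dAI ρ₁ ρ₂ = 0 ↔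
    ∀ ε > 0, (∃ f, IsEpsIsometry ρ₁ ρ₂ ε f) ∧ ∃ g, IsEpsIsometry ρ₂ ρ₁ ε g := by
  constructor
  · intro h ε hε
    have hlt : dAI ρ₁ ρ₂ < ENNReal.ofReal ε := h ▸ ENNReal.ofReal_pos.2 hε
    simp only [dAI, iInf_lt_iff] at hlt
    obtain ⟨δ, -, ⟨f, hf⟩, ⟨g, hg⟩, hδε⟩ := hlt
    have hδε : δ ≤ ε := ((ENNReal.ofReal_lt_ofReal_iff hε).1 hδε).le
    exact ⟨⟨f, hf.mono hδε⟩, ⟨g, hg.mono hδε⟩⟩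
  · intro h
    refine le_antisymm (ENNReal.le_of_forall_pos_le_add fun ε hε _ => ?_) bot_le
    obtain ⟨⟨f, hf⟩, ⟨g, hg⟩⟩ := h ε hε
    rw [zero_add, ← ENNReal.ofReal_coe_nnreal]
    exact iInf₂_le_of_le (ε : ℝ) hε <| iInf₂_le_of_le ⟨f, hf⟩ ⟨g, hg⟩ le_rfl

theorem tendsto_of_isEpsIsometry {l : Filter ι} {F : ι → Z₁ → Z₂} {ε : ι → ℝ}
    (hF : ∀ i, IsEpsIsometry ρ₁ ρ₂ (ε i) (F i)) (hε : Tendsto ε l (𝓝 0)) (ξ η : Z₁) :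
    Tendsto (fun i => ρ₂ (F i ξ) (F i η)) l (𝓝 (ρ₁ ξ η)) := by
  have hdist : Tendsto (fun i => ρ₂ (F i ξ) (F i η) - ρ₁ ξ η) l (𝓝 0) :=
    squeeze_zero_norm (fun i => ((hF i).1 ξ η).le) hε
  simpa using hdist.add_const (ρ₁ ξ η)

end EpsIsometry

namespace IsSemiMetric

variable {ι Z : Type*} [TopologicalSpace Z] {ρ : Z → Z → ℝ} {l : Filter ι}

theorem self_eq_zero (hρ : IsSemiMetric ρ) (ξ : Z) : ρ ξ ξ = 0 :=
  (hρ.2.2.2 ξ ξ).2 rfl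

theorem tendsto (hρ : IsSemiMetric ρ) {a b : ι → Z} {x y : Z}
    (ha : Tendsto a l (𝓝 x)) (hb : Tendsto b l (𝓝 y)) :
    Tendsto (fun i => ρ (a i) (b i)) l (𝓝 (ρ x y)) :=
  (hρ.1.tendsto (x, y)).comp (ha.prodMk_nhds hb)

theorem eq_of_tendsto [l.NeBot] (hρ : IsSemiMetric ρ) {a b : ι → Z} {x y : Z}
    (ha : Tendsto a l (𝓝 x)) (hb : Tendsto b l (𝓝 y))
    (hab : Tendsto (fun i => ρ (a i) (b i)) l (𝓝 0)) : x = y :=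
  (hρ.2.2.2 x y).1 (tendsto_nhds_unique (hρ.tendsto ha hb) hab)

theorem injective_of_isometric {Z' : Type*} {ρ' : Z' → Z' → ℝ} (hρ : IsSemiMetric ρ)
    {f : Z → Z'} (hf : ∀ ξ η, ρ' (f ξ) (f η) = ρ ξ η) (hρ' : ∀ ζ, ρ' ζ ζ = 0) :
    Function.Injective f := fun ξ η h => (hρ.2.2.2 ξ η).1 (by rw [← hf, h, hρ'])

end IsSemiMetric

section Limits

variable {ι Z₁ Z₂ : Type*} [TopologicalSpace Z₂]
  {ρ₁ : Z₁ → Z₁ → ℝ} {ρ₂ : Z₂ → Z₂ → ℝ} {F : ι → Z₁ → Z₂} {ε : ι → ℝ} {f : Z₁ → Z₂}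

theorem isometry_of_tendsto_isEpsIsometry {l : Filter ι} [l.NeBot] (hρ₂ : IsSemiMetric ρ₂)
    (hF : ∀ i, IsEpsIsometry ρ₁ ρ₂ (ε i) (F i)) (hε : Tendsto ε l (𝓝 0))
    (hf : ∀ ξ, Tendsto (F · ξ) l (𝓝 (f ξ))) (ξ η : Z₁) : ρ₂ (f ξ) (f η) = ρ₁ ξ η :=
  tendsto_nhds_unique (hρ₂.tendsto (hf ξ) (hf η)) (tendsto_of_isEpsIsometry hF hε ξ η)

theorem surjective_of_tendsto_isEpsIsometry [TopologicalSpace Z₁] [CompactSpace Z₁]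
    [CompactSpace Z₂] (hρ₁ : IsSemiMetric ρ₁) (hρ₂ : IsSemiMetric ρ₂) {U : Ultrafilter ι}
    (hF : ∀ i, IsEpsIsometry ρ₁ ρ₂ (ε i) (F i)) (hε : Tendsto ε U (𝓝 0))
    (hf : ∀ ξ, Tendsto (F · ξ) U (𝓝 (f ξ))) : Function.Surjective f := by
  intro ζ
  choose ξs hξs using fun i => (hF i).2 ζ
  set ξ := (U.map ξs).lim
  have hξ : Tendsto ξs U (𝓝 ξ) := (U.map ξs).le_nhds_lim
  set w := (U.map fun i => F i (ξs i)).lim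
  have hw : Tendsto (fun i => F i (ξs i)) U (𝓝 w) := (U.map fun i => F i (ξs i)).le_nhds_lim
  have hwζ : w = ζ := hρ₂.eq_of_tendsto hw tendsto_const_nhds <|
    squeeze_zero (fun i => hρ₂.2.2.1 _ _) (fun i => (hξs i).le) hε
  have hbound : Tendsto (fun i => ρ₁ ξ (ξs i) + ε i) U (𝓝 0) := by
    simpa [hρ₁.self_eq_zero] using (hρ₁.tendsto (tendsto_const_nhds (x := ξ)) hξ).add hε
  have hfξw : f ξ = w := hρ₂.eq_of_tendsto (hf ξ) hw <|
    squeeze_zero (fun i => hρ₂.2.2.1 _ _) (fun i => (hF i).le_add ξ (ξs i)) hbound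
  exact ⟨ξ, hfξw.trans hwζ⟩

theorem exists_surjective_isometry_of_forall_isEpsIsometry [TopologicalSpace Z₁]
    [CompactSpace Z₁] [CompactSpace Z₂]
    (hρ₁ : IsSemiMetric ρ₁) (hρ₂ : IsSemiMetric ρ₂)
    (h : ∀ ε > 0, ∃ f : Z₁ → Z₂, IsEpsIsometry ρ₁ ρ₂ ε f) :
    ∃ f : Z₁ → Z₂, Function.Surjective f ∧ ∀ ξ η, ρ₂ (f ξ) (f η) = ρ₁ ξ η := by
  choose F hF using fun n : ℕ => h (1 / ((n : ℝ) + 1)) Nat.one_div_pos_of_nat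
  set U : Ultrafilter ℕ := Ultrafilter.of atTop
  have hε : Tendsto (fun n : ℕ => 1 / ((n : ℝ) + 1)) U (𝓝 0) :=
    tendsto_one_div_add_atTop_nhds_zero_nat.mono_left (Ultrafilter.of_le _)
  have hf : ∀ ξ, Tendsto (F · ξ) U (𝓝 ((U.map (F · ξ)).lim)) := fun ξ =>
    (U.map (F · ξ)).le_nhds_lim
  exact ⟨_, surjective_of_tendsto_isEpsIsometry hρ₁ hρ₂ hF hε hf,
    isometry_of_tendsto_isEpsIsometry hρ₂ hF hε hf⟩

theorem isEpsIsometry_of_surjective (hρ₂ : IsSemiMetric ρ₂) (hsurj : Function.Surjective f)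
    (hf : ∀ ξ η, ρ₂ (f ξ) (f η) = ρ₁ ξ η) {ε : ℝ} (hε : 0 < ε) : IsEpsIsometry ρ₁ ρ₂ ε f := by
  refine ⟨fun ξ η => by simpa [hf] using hε, fun ζ => ?_⟩
  obtain ⟨ξ, rfl⟩ := hsurj ζ
  exact ⟨ξ, by rwa [hρ₂.self_eq_zero]⟩

end Limits

theorem dAI_eq_zero_iff_isometric_general
    {Z₁ : Type u} [TopologicalSpace Z₁] [CompactSpace Z₁]
    {Z₂ : Type v} [TopologicalSpace Z₂] [CompactSpace Z₂]
    (ρ₁ : Z₁ → Z₁ → ℝ) (hρ₁ : IsSemiMetric ρ₁)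
    (ρ₂ : Z₂ → Z₂ → ℝ) (hρ₂ : IsSemiMetric ρ₂) :
    dAI ρ₁ ρ₂ = 0 ↔
      ∃ f : Z₁ → Z₂, Function.Surjective f ∧ ∀ ξ η : Z₁, ρ₂ (f ξ) (f η) = ρ₁ ξ η := by
  rw [dAI_eq_zero_iff_forall_isEpsIsometry]
  refine ⟨fun h => exists_surjective_isometry_of_forall_isEpsIsometry hρ₁ hρ₂ fun ε hε =>
    (h ε hε).1, ?_⟩
  rintro ⟨f, hsurj, hf⟩ ε hε
  have hbij : Function.Bijective f := ⟨hρ₁.injective_of_isometric hf hρ₂.self_eq_zero, hsurj⟩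
  set e := Equiv.ofBijective f hbij
  have he : ∀ ζ ζ', ρ₁ (e.symm ζ) (e.symm ζ') = ρ₂ ζ ζ' := fun ζ ζ' => by
    rw [← hf, Equiv.ofBijective_apply_symm_apply f hbij,
      Equiv.ofBijective_apply_symm_apply f hbij]
  exact ⟨⟨f, isEpsIsometry_of_surjective hρ₂ hsurj hf hε⟩,
    ⟨e.symm, isEpsIsometry_of_surjective hρ₁ e.symm.surjective he hε⟩⟩

/-- Two (nonempty) compact semi-metric spaces are at AI-distance zero if and
only if they are isometric, i.e. there is a surjective map preserving the semi-metrics. -/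
theorem dAI_eq_zero_iff_isometric
    {Z₁ : Type u} [TopologicalSpace Z₁] [CompactSpace Z₁] [TopologicalSpace.MetrizableSpace Z₁]
    [Nonempty Z₁]
    {Z₂ : Type v} [TopologicalSpace Z₂] [CompactSpace Z₂] [TopologicalSpace.MetrizableSpace Z₂]
    [Nonempty Z₂]
    (ρ₁ : Z₁ → Z₁ → ℝ) (hρ₁ : IsSemiMetric ρ₁)
    (ρ₂ : Z₂ → Z₂ → ℝ) (hρ₂ : IsSemiMetric ρ₂) :
    dAI ρ₁ ρ₂ = 0 ↔
      ∃ f : Z₁ → Z₂, Function.Surjective f ∧ ∀ ξ η : Z₁, ρ₂ (f ξ) (f η) = ρ₁ ξ η :=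
  dAI_eq_zero_iff_isometric_general ρ₁ hρ₁ ρ₂ hρ₂
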